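/- For all n ≥ 1 and 1 ≤ k ≤ n, the FiboNarayana number N_{n,k,F} = (1/F_n) · binom(n,k)_F · binom(n,k-1)_F is a positive integer; equivalently, F_n divides the product binom(n,k)_F · binom(n,k-1)_F of fibonomial coefficients. -/
import Mathlib


/-- The Fibonacci factorial `F_n! = F_n · F_{n-1} · ⋯ · F_1`, with `F_0! = 1`. -/
def fibFact : ℕ → ℕ
  | 0 => 1
  | n + 1 => Nat.fib (n + 1) * fibFact n

/-- The fibonomial coefficient `binom(n,k)_F = F_n!/(F_k!·F_{n-k}!)` for `0 ≤ k ≤ n`,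
and `0` otherwise. Indices are integers so that negative arguments make sense. -/
def fibBinom (n k : ℤ) : ℕ :=
  if 0 ≤ k ∧ k ≤ n then fibFact n.toNat / (fibFact k.toNat * fibFact (n - k).toNat) else 0

lemma fibFact_pos (n : ℕ) : 0 < fibFact n := by
  induction n with
  | zero => simp [fibFact]
  | succ n ih => exact Nat.mul_pos (Nat.fib_pos.mpr (Nat.succ_pos n)) ih

lemma fibFact_mul_dvd : ∀ a b : ℕ, fibFact a * fibFact b ∣ fibFact (a + b) := by
  have H : ∀ N a b : ℕ, a + b ≤ N → fibFact a * fibFact b ∣ fibFact (a + b) := by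
    intro N
    induction N with
    | zero =>
      intro a b h
      have : a = 0 ∧ b = 0 := by omega
      simp [this.1, this.2, fibFact]
    | succ N ih =>
      intro a b h
      match a, b with
      | 0, b => simp [fibFact]
      | a + 1, 0 => simp [fibFact]
      | a + 1, b + 1 =>
        have key : Nat.fib (a + 1 + (b + 1)) =
            Nat.fib (b + 1) * Nat.fib a + Nat.fib (b + 2) * Nat.fib (a + 1) := by
          have := Nat.fib_add (b + 1) a
          have e : b + 1 + a + 1 = a + 1 + (b + 1) := by omega
          rw [e] at this
          rw [this]
        have hFF : fibFact (a + 1 + (b + 1)) =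
            Nat.fib (a + 1 + (b + 1)) * fibFact (a + b + 1) := by
          have e : a + 1 + (b + 1) = (a + b + 1) + 1 := by omega
          rw [e]; rfl
        rw [hFF, key, Nat.add_mul]
        apply dvd_add
        · -- term1 : fib(b+1) * fib a * fibFact (a+b+1)
          have h1 : fibFact (a + 1) * fibFact b ∣ fibFact (a + b + 1) := by
            have := ih (a + 1) b (by omega)
            have e : a + 1 + b = a + b + 1 := by omega
            rwa [e] at this
          have : fibFact (a + 1) * fibFact (b + 1) =
              Nat.fib (b + 1) * (fibFact (a + 1) * fibFact b) := by
            show fibFact (a + 1) * (Nat.fib (b + 1) * fibFact b) = _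
            ring
          rw [this]
          calc Nat.fib (b + 1) * (fibFact (a + 1) * fibFact b)
              ∣ Nat.fib (b + 1) * fibFact (a + b + 1) := mul_dvd_mul_left _ h1
            _ ∣ Nat.fib (b + 1) * Nat.fib a * fibFact (a + b + 1) := by
                rw [mul_assoc, mul_comm (Nat.fib a)]
                exact mul_dvd_mul_left _ (dvd_mul_right _ _)
        · -- term2 : fib(b+2) * fib(a+1) * fibFact (a+b+1)
          have h2 : fibFact a * fibFact (b + 1) ∣ fibFact (a + b + 1) := by
            have := ih a (b + 1) (by omega)
            have e : a + (b + 1) = a + b + 1 := by omega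
            rwa [e] at this
          have : fibFact (a + 1) * fibFact (b + 1) =
              Nat.fib (a + 1) * (fibFact a * fibFact (b + 1)) := by
            show Nat.fib (a + 1) * fibFact a * fibFact (b + 1) = _
            ring
          rw [this]
          calc Nat.fib (a + 1) * (fibFact a * fibFact (b + 1))
              ∣ Nat.fib (a + 1) * fibFact (a + b + 1) := mul_dvd_mul_left _ h2
            _ ∣ Nat.fib (b + 2) * Nat.fib (a + 1) * fibFact (a + b + 1) := by
                rw [mul_comm (Nat.fib (b + 2)), mul_assoc]
                exact mul_dvd_mul_left _ (dvd_mul_left _ _)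
  exact fun a b => H (a + b) a b le_rfl

/-- The fibonomial as a natural-number function. -/
def fC (n k : ℕ) : ℕ := fibFact n / (fibFact k * fibFact (n - k))

lemma fC_mul (n k : ℕ) (h : k ≤ n) :
    fC n k * (fibFact k * fibFact (n - k)) = fibFact n := by
  apply Nat.div_mul_cancel
  have := fibFact_mul_dvd k (n - k)
  rwa [Nat.add_sub_cancel' h] at this

lemma fC_pos (n k : ℕ) (h : k ≤ n) : 0 < fC n k := by
  apply Nat.div_pos
  · apply Nat.le_of_dvd (fibFact_pos n)
    have := fibFact_mul_dvd k (n - k)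
    rwa [Nat.add_sub_cancel' h] at this
  · exact Nat.mul_pos (fibFact_pos _) (fibFact_pos _)

lemma idA (a b : ℕ) :
    Nat.fib (a + 1) * fC (a + 1 + b) (a + 1) = Nat.fib (a + 1 + b) * fC (a + b) a := by
  have M0 : 0 < fibFact a * fibFact b := Nat.mul_pos (fibFact_pos _) (fibFact_pos _)
  apply Nat.eq_of_mul_eq_mul_right M0
  have e1 : a + 1 + b - (a + 1) = b := by omega
  have e2 : a + b - a = b := by omega
  have L : Nat.fib (a + 1) * fC (a + 1 + b) (a + 1) * (fibFact a * fibFact b)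
      = fC (a + 1 + b) (a + 1) * (fibFact (a + 1) * fibFact (a + 1 + b - (a + 1))) := by
    rw [e1]
    show _ = fC (a + 1 + b) (a + 1) * (Nat.fib (a + 1) * fibFact a * fibFact b)
    ring
  rw [L, fC_mul _ _ (by omega)]
  have R : Nat.fib (a + 1 + b) * fC (a + b) a * (fibFact a * fibFact b)
      = Nat.fib (a + 1 + b) * (fC (a + b) a * (fibFact a * fibFact (a + b - a))) := by
    rw [e2]; ring
  rw [R, fC_mul _ _ (by omega)]
  have e3 : a + 1 + b = (a + b) + 1 := by omega
  rw [e3]; rfl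

lemma idB (a b : ℕ) :
    Nat.fib (b + 1) * fC (a + 1 + b) a = Nat.fib (a + 1 + b) * fC (a + b) a := by
  have M0 : 0 < fibFact a * fibFact b := Nat.mul_pos (fibFact_pos _) (fibFact_pos _)
  apply Nat.eq_of_mul_eq_mul_right M0
  have e1 : a + 1 + b - a = b + 1 := by omega
  have e2 : a + b - a = b := by omega
  have L : Nat.fib (b + 1) * fC (a + 1 + b) a * (fibFact a * fibFact b)
      = fC (a + 1 + b) a * (fibFact a * fibFact (a + 1 + b - a)) := by
    rw [e1]
    show _ = fC (a + 1 + b) a * (fibFact a * (Nat.fib (b + 1) * fibFact b))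
    ring
  rw [L, fC_mul _ _ (by omega)]
  have R : Nat.fib (a + 1 + b) * fC (a + b) a * (fibFact a * fibFact b)
      = Nat.fib (a + 1 + b) * (fC (a + b) a * (fibFact a * fibFact (a + b - a))) := by
    rw [e2]; ring
  rw [R, fC_mul _ _ (by omega)]
  have e3 : a + 1 + b = (a + b) + 1 := by omega
  rw [e3]; rfl

lemma main_dvd (a b : ℕ) :
    Nat.fib (a + 1 + b) ∣ fC (a + 1 + b) (a + 1) * fC (a + 1 + b) a := by
  set N := a + 1 + b with hN
  set f := Nat.fib N with hf
  have hfpos : 0 < f := Nat.fib_pos.mpr (by omega)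
  set A := fC N (a + 1)
  set B := fC N a
  have h1 : f ∣ Nat.fib (a + 1) * A := ⟨fC (a + b) a, idA a b⟩
  have h2 : f ∣ Nat.fib (b + 1) * B := ⟨fC (a + b) a, idB a b⟩
  set d := Nat.gcd (Nat.fib (a + 1)) f with hd
  set d' := Nat.gcd (Nat.fib (b + 1)) f with hd'
  have hdpos : 0 < d := Nat.gcd_pos_of_pos_right _ hfpos
  have hd'pos : 0 < d' := Nat.gcd_pos_of_pos_right _ hfpos
  have hdf : d ∣ f := Nat.gcd_dvd_right _ _
  have hd'f : d' ∣ f := Nat.gcd_dvd_right _ _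
  -- coprimality of d and d'
  have hcop : Nat.Coprime d d' := by
    have hg : Nat.gcd (Nat.gcd (a + 1) N) (Nat.gcd (b + 1) N) = 1 := by
      set g := Nat.gcd (Nat.gcd (a + 1) N) (Nat.gcd (b + 1) N) with hgdef
      have g1 : g ∣ a + 1 := (Nat.gcd_dvd_left _ _).trans (Nat.gcd_dvd_left _ _)
      have g2 : g ∣ b + 1 := (Nat.gcd_dvd_right _ _).trans (Nat.gcd_dvd_left _ _)
      have g3 : g ∣ N := (Nat.gcd_dvd_left _ _).trans (Nat.gcd_dvd_right _ _)
      have g4 : g ∣ N + 1 := by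
        have h := Nat.dvd_add g1 g2
        have e : (a + 1) + (b + 1) = N + 1 := by omega
        rwa [e] at h
      have g5 : g ∣ 1 := by
        have h := Nat.dvd_sub g4 g3
        simpa using h
      exact Nat.dvd_one.mp g5
    have : Nat.gcd d d' = 1 := by
      rw [hd, hd', hf, ← Nat.fib_gcd, ← Nat.fib_gcd, ← Nat.fib_gcd, hg, Nat.fib_one]
    exact this
  -- f / d divides A
  have hA : f / d ∣ A := by
    have hdvd1 : d ∣ Nat.fib (a + 1) := Nat.gcd_dvd_left _ _
    have step : d * (f / d) ∣ d * (Nat.fib (a + 1) / d * A) := by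
      rw [Nat.mul_div_cancel' hdf, ← mul_assoc, Nat.mul_div_cancel' hdvd1]
      exact h1
    have step2 : f / d ∣ Nat.fib (a + 1) / d * A :=
      (Nat.mul_dvd_mul_iff_left hdpos).mp step
    exact (Nat.coprime_div_gcd_div_gcd (m := Nat.fib (a + 1)) (n := f) hdpos).symm.dvd_of_dvd_mul_left step2
  have hB : f / d' ∣ B := by
    have hdvd1 : d' ∣ Nat.fib (b + 1) := Nat.gcd_dvd_left _ _
    have step : d' * (f / d') ∣ d' * (Nat.fib (b + 1) / d' * B) := by
      rw [Nat.mul_div_cancel' hd'f, ← mul_assoc, Nat.mul_div_cancel' hdvd1]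
      exact h2
    have step2 : f / d' ∣ Nat.fib (b + 1) / d' * B :=
      (Nat.mul_dvd_mul_iff_left hd'pos).mp step
    exact (Nat.coprime_div_gcd_div_gcd (m := Nat.fib (b + 1)) (n := f) hd'pos).symm.dvd_of_dvd_mul_left step2
  have hdd' : d * d' ∣ f := hcop.mul_dvd_of_dvd_of_dvd hdf hd'f
  have hff : f ∣ f / d * (f / d') := by
    rw [Nat.div_mul_div_comm hdf hd'f, Nat.mul_div_assoc f hdd']
    exact dvd_mul_right _ _
  exact hff.trans (mul_dvd_mul hA hB)

theorem fiboNarayana_pos_int (n k : ℤ) (hn : 1 ≤ n) (hk : 1 ≤ k) (hkn : k ≤ n) :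
    Nat.fib n.toNat ∣ fibBinom n k * fibBinom n (k - 1) ∧
      0 < fibBinom n k * fibBinom n (k - 1) / Nat.fib n.toNat := by
  set a := (k - 1).toNat with ha
  set b := (n - k).toNat with hb
  have hka : k.toNat = a + 1 := by omega
  have hna : n.toNat = a + 1 + b := by omega
  have hnk : (n - k).toNat = b := rfl
  have hnk1 : (n - (k - 1)).toNat = b + 1 := by omega
  have hk1 : (k - 1).toNat = a := rfl
  have e1 : fibBinom n k = fC (a + 1 + b) (a + 1) := by
    rw [fibBinom, if_pos ⟨by omega, hkn⟩, fC, hka, hna, hnk,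
      show a + 1 + b - (a + 1) = b from by omega]
  have e2 : fibBinom n (k - 1) = fC (a + 1 + b) a := by
    rw [fibBinom, if_pos ⟨by omega, by omega⟩, fC, hk1, hna, hnk1,
      show a + 1 + b - a = b + 1 from by omega]
  rw [e1, e2, hna]
  have hdvd := main_dvd a b
  refine ⟨hdvd, ?_⟩
  apply Nat.div_pos
  · apply Nat.le_of_dvd _ hdvd
    exact Nat.mul_pos (fC_pos _ _ (by omega)) (fC_pos _ _ (by omega))
  · exact Nat.fib_pos.mpr (by omega)
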